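/- Let G be a topological group containing a subspace X homeomorphic to a subspace of the Sorgenfrey line, and suppose X × X contains a discrete subspace of cardinality κ⁺ (the successor of an infinite cardinal κ). Then G contains a discrete subspace of cardinality κ⁺; in particular, the spread of G is strictly greater than κ. -/

import Mathlib

open Set Topology

def SorgenfreyLine : Type := ℝ

notation "ℝₗ" => SorgenfreyLine

noncomputable instance : Field ℝₗ := inferInstanceAs (Field ℝ)

noncomputable instance : LinearOrder ℝₗ := inferInstanceAs (LinearOrder ℝ)

instance : IsStrictOrderedRing ℝₗ := inferInstanceAs (IsStrictOrderedRing ℝ)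

instance : TopologicalSpace ℝₗ :=
  TopologicalSpace.generateFrom {s : Set ℝₗ | ∃ a b : ℝₗ, a < b ∧ s = Set.Ico a b}

/-- The spread of a topological space: the supremum of cardinalities of discrete subspaces. -/
noncomputable def spread (X : Type*) [TopologicalSpace X] : Cardinal :=
  sSup {c : Cardinal | ∃ D : Set X, DiscreteTopology D ∧ Cardinal.mk D = c}

def Cometrizable (Y : Type*) [t : TopologicalSpace Y] : Prop :=
  ∃ τ : TopologicalSpace Y, t ≤ τ ∧ @TopologicalSpace.MetrizableSpace Y τ ∧
    ∀ y : Y, ∀ U ∈ nhds y, ∃ V ∈ nhds y, V ⊆ U ∧ IsClosed[τ] V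

def IsKDense {X : Type*} [TopologicalSpace X] (D : Set X) : Prop :=
  ∀ K : Set X, IsCompact K → ∃ K' : Set X, IsCompact K' ∧ K ⊆ K' ∧ K' ⊆ closure (D ∩ K')

def KSeparable (X : Type*) [TopologicalSpace X] : Prop :=
  ∃ D : Set X, D.Countable ∧ IsKDense D

/-!
Write `μ (a, b) = φ a * φ b`, where `φ : X → G` is the embedding. As `G` is a topological group,
`q ↦ (q.1, μ q)` and `q ↦ (q.2, μ q)` are embeddings of `X × X`, so each `p ∈ Γ` has a Sorgenfrey
box `[p, p + δ)²` meeting `Γ` only in `p`, and a neighbourhood of `μ p` missing `μ q` whenever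
`q ∈ Γ \ {p}` has a coordinate in `[p.i, p.i + δ)`. Pigeonhole over the rationals leaves `κ⁺`
points of `Γ`, each within `δ` of the others. None of them dominates another, so for distinct
`p, q` among them some coordinate of `q` lies in `[p.i, p.i + δ)`; hence `μ` is injective with
discrete image on them.
-/

open Filter Cardinal

instance : Archimedean ℝₗ := inferInstanceAs (Archimedean ℝ)

namespace SorgenfreyLine

theorem isTopologicalBasis_Ico :
    TopologicalSpace.IsTopologicalBasis {s : Set ℝₗ | ∃ a b : ℝₗ, a < b ∧ s = Ico a b} where
  exists_subset_inter := by
    rintro _ ⟨a, b, -, rfl⟩ _ ⟨c, d, -, rfl⟩ x ⟨⟨hax, hxb⟩, ⟨hcx, hxd⟩⟩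
    refine ⟨Ico x (min b d), ⟨x, _, lt_min hxb hxd, rfl⟩, ⟨le_rfl, lt_min hxb hxd⟩, ?_⟩
    exact fun y ⟨hxy, hy⟩ => ⟨⟨hax.trans hxy, hy.trans_le (min_le_left _ _)⟩,
      ⟨hcx.trans hxy, hy.trans_le (min_le_right _ _)⟩⟩
  sUnion_eq := eq_univ_of_forall fun x => ⟨Ico x (x + 1), ⟨x, x + 1, lt_add_one x, rfl⟩,
    le_rfl, lt_add_one x⟩
  eq_generateFrom := rfl

theorem nhds_basis_Ico (a : ℝₗ) : (𝓝 a).HasBasis (a < ·) (Ico a ·) := by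
  refine isTopologicalBasis_Ico.nhds_hasBasis.to_hasBasis ?_
    fun b hab => ⟨Ico a b, ⟨⟨a, b, hab, rfl⟩, le_rfl, hab⟩, subset_rfl⟩
  rintro _ ⟨⟨c, b, -, rfl⟩, hca, hab⟩
  exact ⟨b, hab, Ico_subset_Ico_left hca⟩

theorem exists_Ico_subset_of_mem_nhds {X : Set ℝₗ} {z : X} {U : Set X} (hU : U ∈ 𝓝 z) :
    ∃ δ > 0, ∀ w : X, (w : ℝₗ) ∈ Ico (z : ℝₗ) (z + δ) → w ∈ U := by
  obtain ⟨b, hzb, hb⟩ :=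
    (IsInducing.subtypeVal.basis_nhds (nhds_basis_Ico (z : ℝₗ))).mem_iff.1 hU
  exact ⟨b - z, sub_pos.2 hzb, fun w hw => hb (by simpa using hw)⟩

end SorgenfreyLine

section Pigeonhole

variable {α : Type u} {κ : Cardinal.{u}}

theorem exists_subset_succ_le_mk_forall_eq {β : Type*} [Countable β] (hκ : ℵ₀ ≤ κ) {s : Set α}
    (hs : Order.succ κ ≤ #s) (f : α → β) :
    ∃ t ⊆ s, Order.succ κ ≤ #t ∧ ∃ b, ∀ x ∈ t, f x = b := by
  have := Countable.toSmall.{u} β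
  let e : β ≃ Shrink.{u} β := equivShrink β
  have : Countable (Shrink.{u} β) := Countable.of_equiv _ e
  have hcof : #(Shrink.{u} β) < (Order.succ κ).ord.cof := by
    rw [(isRegular_succ hκ).cof_ord]
    exact mk_le_aleph0.trans_lt (hκ.trans_lt (Order.lt_succ κ))
  obtain ⟨b, t, hts, ht, hf⟩ := infinite_pigeonhole_set (fun x : s => e (f x)) _ hs
    (hκ.trans (Order.le_succ κ)) hcof
  exact ⟨t, hts, ht, e.symm b, fun x hx => e.eq_symm_apply.2 (hf hx)⟩

theorem exists_subset_succ_le_mk_lt_add {K : Type*} [Field K] [LinearOrder K]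
    [IsStrictOrderedRing K] [Archimedean K] (hκ : ℵ₀ ≤ κ) {s : Set α}
    (hs : Order.succ κ ≤ #s) (g : α → K) {δ : α → K} (hδ : ∀ x ∈ s, 0 < δ x) :
    ∃ t ⊆ s, Order.succ κ ≤ #t ∧ ∀ x ∈ t, ∀ y ∈ t, g y < g x + δ x := by
  -- `g x` lies in a rational window `(c, c + r)` with `r < δ x`; pigeonhole fixes the window.
  have hrc : ∀ x ∈ s, ∃ r c : ℚ, (r : K) < δ x ∧ g x - r < c ∧ (c : K) < g x := by
    intro x hx
    obtain ⟨r, hr₀, hr⟩ := exists_rat_btwn (hδ x hx)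
    obtain ⟨c, hc₁, hc₂⟩ := exists_rat_btwn (sub_lt_self (g x) hr₀)
    exact ⟨r, c, hr, hc₁, hc₂⟩
  choose! r c hr hc₁ hc₂ using hrc
  obtain ⟨t, hts, ht, ⟨r₀, c₀⟩, hrc⟩ := exists_subset_succ_le_mk_forall_eq hκ hs fun x => (r x, c x)
  refine ⟨t, hts, ht, fun x hx y hy => ?_⟩
  obtain ⟨hrx, hcx⟩ := Prod.mk_inj.1 (hrc x hx)
  obtain ⟨hry, hcy⟩ := Prod.mk_inj.1 (hrc y hy)
  calc g y < c y + r y := by linarith [hc₁ y (hts hy)]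
    _ = c x + r x := by rw [hcy, hry, ← hcx, ← hrx]
    _ < g x + δ x := add_lt_add (hc₂ x (hts hx)) (hr x (hts hx))

end Pigeonhole

theorem IsDiscrete.exists_nhds_prod_forall_eq {α β γ : Type*} [TopologicalSpace α]
    [TopologicalSpace β] [TopologicalSpace γ] {F : α → β × γ} (hF : IsInducing F) {Γ : Set α}
    (hΓ : IsDiscrete Γ) {p : α} (hp : p ∈ Γ) :
    ∃ U ∈ 𝓝 (F p).1, ∃ V ∈ 𝓝 (F p).2, ∀ q ∈ Γ, (F q).1 ∈ U → (F q).2 ∈ V → q = p := by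
  obtain ⟨W, hW, hWΓ⟩ := nhds_inter_eq_singleton_of_mem_discrete hΓ hp
  obtain ⟨t, ht, htW⟩ := mem_comap.1 (hF.nhds_eq_comap p ▸ hW)
  obtain ⟨U, hU, V, hV, hUV⟩ := mem_nhds_prod_iff.1 ht
  exact ⟨U, hU, V, hV, fun q hq hU hV => hWΓ.subset ⟨htW (hUV ⟨hU, hV⟩), hq⟩⟩

theorem injOn_and_isDiscrete_image_of_forall_notMem {α Y : Type*} [TopologicalSpace Y] {f : α → Y}
    {T : Set α} {N : α → Set Y} (hN : ∀ p ∈ T, N p ∈ 𝓝 (f p))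
    (hsep : ∀ p ∈ T, ∀ q ∈ T, q ≠ p → f q ∉ N p) : InjOn f T ∧ IsDiscrete (f '' T) := by
  refine ⟨fun p hp q hq hpq => by_contra fun hne =>
    hsep p hp q hq (Ne.symm hne) (hpq ▸ mem_of_mem_nhds (hN p hp)), .of_nhdsWithin ?_⟩
  rintro _ ⟨p, hp, rfl⟩
  refine le_pure_iff.2 (mem_nhdsWithin_iff_exists_mem_nhds_inter.2 ⟨N p, hN p hp, ?_⟩)
  rintro _ ⟨hq, q, hqT, rfl⟩
  by_contra hne
  exact hsep p hp q hqT (fun h => hne (h ▸ rfl)) hq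

section TopologicalGroup

variable {G : Type*} [Group G] [TopologicalSpace G] [IsTopologicalGroup G]
  {Y : Type*} [TopologicalSpace Y] {φ : Y → G}

theorem isInducing_fst_mul (hφ : IsInducing φ) :
    IsInducing fun q : Y × Y => (q.1, φ q.1 * φ q.2) := by
  have := hφ.continuous
  refine .of_comp (g := fun x : Y × G => (x.1, (φ x.1)⁻¹ * x.2)) (by fun_prop) (by fun_prop) ?_
  convert IsInducing.id.prodMap hφ using 1
  ext q <;> simp

theorem isInducing_snd_mul (hφ : IsInducing φ) :
    IsInducing fun q : Y × Y => (q.2, φ q.1 * φ q.2) := by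
  have := hφ.continuous
  refine .of_comp (g := fun x : Y × G => (x.2 * (φ x.1)⁻¹, x.1)) (by fun_prop) (by fun_prop) ?_
  convert hφ.prodMap IsInducing.id using 1
  ext q <;> simp

end TopologicalGroup

section SorgenfreySquare

variable {G : Type*} [Group G] [TopologicalSpace G] [IsTopologicalGroup G]
  {X : Set ℝₗ} {φ : X → G} {Γ : Set (X × X)}

theorem exists_nhds_mul_separated (hφ : IsInducing φ) (hΓ : IsDiscrete Γ) {p : X × X}
    (hp : p ∈ Γ) : ∃ N ∈ 𝓝 (φ p.1 * φ p.2), ∃ δ > 0,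
      (∀ q ∈ Γ, (q.1 : ℝₗ) ∈ Ico (p.1 : ℝₗ) (p.1 + δ) →
        (q.2 : ℝₗ) ∈ Ico (p.2 : ℝₗ) (p.2 + δ) → q = p) ∧
      ∀ q ∈ Γ, q ≠ p → ((q.1 : ℝₗ) ∈ Ico (p.1 : ℝₗ) (p.1 + δ) ∨
        (q.2 : ℝₗ) ∈ Ico (p.2 : ℝₗ) (p.2 + δ)) → φ q.1 * φ q.2 ∉ N := by
  obtain ⟨U₀, hU₀, V₀, hV₀, hbox⟩ := hΓ.exists_nhds_prod_forall_eq IsInducing.id hp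
  obtain ⟨U, hU, N₁, hN₁, h₁⟩ := hΓ.exists_nhds_prod_forall_eq (isInducing_fst_mul hφ) hp
  obtain ⟨V, hV, N₂, hN₂, h₂⟩ := hΓ.exists_nhds_prod_forall_eq (isInducing_snd_mul hφ) hp
  obtain ⟨δ₁, hδ₁, hU'⟩ := SorgenfreyLine.exists_Ico_subset_of_mem_nhds (inter_mem hU₀ hU)
  obtain ⟨δ₂, hδ₂, hV'⟩ := SorgenfreyLine.exists_Ico_subset_of_mem_nhds (inter_mem hV₀ hV)
  have hmono₁ : Ico (p.1 : ℝₗ) (p.1 + min δ₁ δ₂) ⊆ Ico (p.1 : ℝₗ) (p.1 + δ₁) :=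
    Ico_subset_Ico_right (by simp)
  have hmono₂ : Ico (p.2 : ℝₗ) (p.2 + min δ₁ δ₂) ⊆ Ico (p.2 : ℝₗ) (p.2 + δ₂) :=
    Ico_subset_Ico_right (by simp)
  refine ⟨N₁ ∩ N₂, inter_mem hN₁ hN₂, min δ₁ δ₂, lt_min hδ₁ hδ₂,
    fun q hq hq₁ hq₂ => hbox q hq (hU' _ (hmono₁ hq₁)).1 (hV' _ (hmono₂ hq₂)).1, ?_⟩
  rintro q hq hne (hq₁ | hq₂) ⟨hN₁q, hN₂q⟩
  · exact hne (h₁ q hq (hU' _ (hmono₁ hq₁)).2 hN₁q)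
  · exact hne (h₂ q hq (hV' _ (hmono₂ hq₂)).2 hN₂q)

theorem exists_subset_injOn_isDiscrete_image_mul (hφ : IsInducing φ) (hΓ : IsDiscrete Γ)
    {κ : Cardinal.{0}} (hκ : ℵ₀ ≤ κ) (hΓκ : Order.succ κ ≤ #Γ) :
    ∃ T ⊆ Γ, Order.succ κ ≤ #T ∧ InjOn (fun q : X × X => φ q.1 * φ q.2) T ∧
      IsDiscrete ((fun q : X × X => φ q.1 * φ q.2) '' T) := by
  choose! N hN δ hδ hbox hsep using fun p (hp : p ∈ Γ) => exists_nhds_mul_separated hφ hΓ hp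
  obtain ⟨T₁, hT₁Γ, hT₁, h₁⟩ :=
    exists_subset_succ_le_mk_lt_add hκ hΓκ (fun p : X × X => (p.1 : ℝₗ)) hδ
  obtain ⟨T, hTT₁, hT, h₂⟩ := exists_subset_succ_le_mk_lt_add hκ hT₁
    (fun p : X × X => (p.2 : ℝₗ)) fun p hp => hδ p (hT₁Γ hp)
  have hTΓ := hTT₁.trans hT₁Γ
  refine ⟨T, hTΓ, hT, injOn_and_isDiscrete_image_of_forall_notMem (fun p hp => hN p (hTΓ hp))
    fun p hp q hq hne => hsep p (hTΓ hp) q (hTΓ hq) hne ?_⟩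
  rcases le_or_gt (p.1 : ℝₗ) q.1 with hpq₁ | hqp₁
  · exact .inl ⟨hpq₁, h₁ p (hTT₁ hp) q (hTT₁ hq)⟩
  rcases le_or_gt (p.2 : ℝₗ) q.2 with hpq₂ | hqp₂
  · exact .inr ⟨hpq₂, h₂ p hp q hq⟩
  -- `q < p` would put `p` into the box of `q`
  exact absurd (hbox q (hTΓ hq) p (hTΓ hp) ⟨hqp₁.le, h₁ q (hTT₁ hq) p (hTT₁ hp)⟩
    ⟨hqp₂.le, h₂ q hq p hp⟩) hne.symm

end SorgenfreySquare

theorem le_spread {Y : Type*} [TopologicalSpace Y] {D : Set Y} (hD : IsDiscrete D) :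
    #D ≤ spread Y :=
  le_csSup ⟨#Y, by rintro _ ⟨D', -, rfl⟩; exact mk_set_le D'⟩ ⟨D, hD.to_subtype, rfl⟩

/-- If a topological group $G$ contains a subspace homeomorphic to a subspace $X$ of the
Sorgenfrey line and $X \times X$ contains a discrete subspace of cardinality $\kappa^+$ for an
infinite cardinal $\kappa$, then $G$ contains a discrete subspace of cardinality $\kappa^+$;
in particular $s(G) > \kappa$. -/
theorem discrete_succ_of_discrete_in_square {G : Type u} [Group G] [TopologicalSpace G]
    [IsTopologicalGroup G] (κ : Cardinal.{0}) (hκ : Cardinal.aleph0 ≤ κ)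
    (X : Set ℝₗ) (S : Set G) (h : Nonempty (S ≃ₜ X))
    (Γ : Set (X × X)) (hΓ : DiscreteTopology Γ) (hΓκ : Cardinal.mk Γ = Order.succ κ) :
    (∃ D : Set G, DiscreteTopology D ∧ Cardinal.mk D = Cardinal.lift.{u} (Order.succ κ)) ∧
      Cardinal.lift.{u} κ < spread G := by
  obtain ⟨e⟩ := h
  have hφ : IsInducing fun x : X => (e.symm x : G) := IsInducing.subtypeVal.comp e.symm.isInducing
  obtain ⟨T, hTΓ, hTκ, hinj, hdisc⟩ := exists_subset_injOn_isDiscrete_image_mul hφ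
    (isDiscrete_iff_discreteTopology.2 hΓ) hκ hΓκ.ge
  have hT : #T = Order.succ κ := le_antisymm (hΓκ ▸ mk_le_mk_of_subset hTΓ) hTκ
  have hD :
      #((fun q : X × X => (e.symm q.1 : G) * e.symm q.2) '' T) = lift.{u} (Order.succ κ) := by
    simpa [hT] using mk_image_eq_of_injOn_lift _ _ hinj
  exact ⟨⟨_, hdisc.to_subtype, hD⟩, (lift_lt.2 (Order.lt_succ κ)).trans_le (hD ▸ le_spread hdisc)⟩
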